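/- Let X be a Tychonoff space. Then ζX = βX if and only if there exists no cozero-set of X with pseudocompact closure in X containing a non-compact zero-set of X. -/

import Mathlib

open Set Topology

/-- A zero-set: the preimage of `{0}` under a continuous real-valued function. -/
def IsZeroSet {Y : Type*} [TopologicalSpace Y] (Z : Set Y) : Prop :=
  ∃ f : C(Y, ℝ), Z = f ⁻¹' {0}

/-- A cozero-set: the complement of a zero-set. -/
def IsCozeroSet {Y : Type*} [TopologicalSpace Y] (C : Set Y) : Prop :=
  IsZeroSet Cᶜ

/-- A space is pseudocompact if every continuous real-valued function on it is bounded. -/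
def IsPseudocompact (Y : Type*) [TopologicalSpace Y] : Prop :=
  ∀ f : C(Y, ℝ), ∃ M : ℝ, ∀ y, |f y| ≤ M

/-- A subset is pseudocompact if it is pseudocompact as a subspace. -/
def IsPseudocompactSet {Y : Type*} [TopologicalSpace Y] (A : Set Y) : Prop :=
  ∀ f : C(A, ℝ), ∃ M : ℝ, ∀ a, |f a| ≤ M

/-- The Hewitt realcompactification `υX`, realized as the subspace of `βX` consisting of
those `p ∈ βX` such that every zero-set of `βX` containing `p` meets `X`. -/
def upsilonSet (X : Type*) [TopologicalSpace X] : Set (StoneCech X) :=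
  {p | ∀ Z : Set (StoneCech X), IsZeroSet Z → p ∈ Z →
    (Z ∩ Set.range (stoneCechUnit : X → StoneCech X)).Nonempty}

/-- `ζX = X ∪ cl_{βX}(βX \ υX)`, as a subset of `βX`. -/
def zetaSet (X : Type*) [TopologicalSpace X] : Set (StoneCech X) :=
  Set.range (stoneCechUnit : X → StoneCech X) ∪ closure (upsilonSet X)ᶜ

/-!
Since `cl (βX \ υX)` is the complement of the interior of `υX`, the equality `ζX = βX` says
that `int υX ⊆ X`. For a cozero-set `C`, the closure `cl_X C` is pseudocompact iff every
`f ∈ C(X)` is bounded on `C` (an unbounded function on `cl_X C` can be damped near the boundary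
of `C` into an unbounded function on `X`), iff `cl_β C ⊆ υX`. A zero-set `Z ⊆ C` is completely
separated from `X \ C`, so `cl_β Z ⊆ int cl_β C ⊆ int υX`, and `cl_β Z` leaves `X` when `Z`
is not compact. Conversely, for `p ∈ int υX \ X`, Urysohn's lemma on `βX` gives a zero-set
neighbourhood of `p` inside a cozero-set whose closure lies in `int υX`; their traces on `X`
are the required `Z ⊆ C`, and `Z` is not compact since otherwise a zero-set of `βX` through
`p` would miss `X`.
-/

section

variable {X : Type*} [TopologicalSpace X]

def IsRelativelyPseudocompact (A : Set X) : Prop :=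
  ∀ f : C(X, ℝ), ∃ M : ℝ, ∀ x ∈ A, |f x| ≤ M

lemma IsZeroSet.isClosed {Z : Set X} (hZ : IsZeroSet Z) : IsClosed Z := by
  obtain ⟨f, rfl⟩ := hZ
  exact isClosed_singleton.preimage f.continuous

lemma IsZeroSet.inter {Z₁ Z₂ : Set X} (h₁ : IsZeroSet Z₁) (h₂ : IsZeroSet Z₂) :
    IsZeroSet (Z₁ ∩ Z₂) := by
  obtain ⟨f, rfl⟩ := h₁
  obtain ⟨g, rfl⟩ := h₂
  refine ⟨⟨fun x => |f x| + |g x|, by fun_prop⟩, ?_⟩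
  ext x
  simp [add_eq_zero_iff_of_nonneg (abs_nonneg (f x)) (abs_nonneg (g x))]

lemma IsCozeroSet.isOpen {C : Set X} (hC : IsCozeroSet C) : IsOpen C :=
  isClosed_compl_iff.1 (IsZeroSet.isClosed hC)

lemma isCozeroSet_setOf_lt (f : C(X, ℝ)) (a : ℝ) : IsCozeroSet {x | f x < a} := by
  refine ⟨⟨fun x => max (a - f x) 0, by fun_prop⟩, ?_⟩
  ext x
  simp

lemma exists_continuous_zero_one_of_isZeroSet {Z₁ Z₂ : Set X} (h₁ : IsZeroSet Z₁)
    (h₂ : IsZeroSet Z₂) (hd : Disjoint Z₁ Z₂) :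
    ∃ u : C(X, ℝ), EqOn u 0 Z₁ ∧ EqOn u 1 Z₂ ∧ ∀ x, u x ∈ Icc (0 : ℝ) 1 := by
  obtain ⟨f, rfl⟩ := h₁
  obtain ⟨g, rfl⟩ := h₂
  have hpos : ∀ x, 0 < |f x| + |g x| := by
    intro x
    by_contra! h
    have hf : f x = 0 := abs_eq_zero.1 (by linarith [abs_nonneg (f x), abs_nonneg (g x)])
    have hg : g x = 0 := abs_eq_zero.1 (by linarith [abs_nonneg (f x), abs_nonneg (g x)])
    exact hd.notMem_of_mem_left hf hg
  have hu : Continuous fun x => |f x| / (|f x| + |g x|) := by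
    fun_prop (disch := exact fun x => (hpos x).ne')
  refine ⟨⟨_, hu⟩,
    fun x (hx : f x = 0) => by simp [hx], fun x (hx : g x = 0) => ?_, fun x => ?_⟩
  · have : f x ≠ 0 := fun h => hd.notMem_of_mem_left h hx
    simp [hx, this]
  · exact ⟨div_nonneg (abs_nonneg _) (hpos x).le,
      (div_le_one (hpos x)).2 (le_add_of_nonneg_right (abs_nonneg _))⟩

lemma exists_stoneCech_extension_of_mem_Icc {f : X → ℝ} (hf : Continuous f) {a b : ℝ}
    (hab : ∀ x, f x ∈ Icc a b) :
    ∃ F : C(StoneCech X, ℝ), (∀ x, F (stoneCechUnit x) = f x) ∧ ∀ q, F q ∈ Icc a b := by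
  have hg : Continuous fun x => (⟨f x, hab x⟩ : Icc a b) := hf.subtype_mk hab
  exact ⟨⟨fun q => (stoneCechExtend hg q : Icc a b),
    continuous_subtype_val.comp (continuous_stoneCechExtend hg)⟩,
    fun x => congrArg Subtype.val (stoneCechExtend_stoneCechUnit hg x),
    fun q => (stoneCechExtend hg q).2⟩

lemma IsRelativelyPseudocompact.mono {A B : Set X} (hB : IsRelativelyPseudocompact B)
    (hAB : A ⊆ B) : IsRelativelyPseudocompact A :=
  fun f => (hB f).imp fun _ hM x hx => hM x (hAB hx)

lemma IsRelativelyPseudocompact.closure_image_subset_upsilonSet {A : Set X}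
    (hA : IsRelativelyPseudocompact A) : closure (stoneCechUnit '' A) ⊆ upsilonSet X := by
  rintro q hq Z ⟨F, rfl⟩ (hqZ : F q = 0)
  by_contra hdisj
  have hF : ∀ x, F (stoneCechUnit x) ≠ 0 := fun x h0 => hdisj ⟨_, h0, x, rfl⟩
  obtain ⟨M, hM⟩ := hA ⟨fun x => (F (stoneCechUnit x))⁻¹,
    (F.continuous.comp continuous_stoneCechUnit).inv₀ hF⟩
  have hbound : stoneCechUnit '' A ⊆ {q | (max M 1)⁻¹ ≤ |F q|} := by
    rintro _ ⟨x, hx, rfl⟩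
    have hx : |(F (stoneCechUnit x))⁻¹| ≤ M := hM x hx
    rw [abs_inv] at hx
    exact inv_le_of_inv_le₀ (abs_pos.2 (hF x)) (hx.trans (le_max_left M 1))
  have hq := closure_minimal hbound (isClosed_le continuous_const F.continuous.abs) hq
  rw [mem_ofPred_eq, hqZ, abs_zero] at hq
  exact (inv_pos.2 (lt_max_of_lt_right one_pos)).not_ge hq

lemma IsCompact.isRelativelyPseudocompact_preimage {K : Set (StoneCech X)} (hK : IsCompact K)
    (hKυ : K ⊆ upsilonSet X) : IsRelativelyPseudocompact (stoneCechUnit ⁻¹' K) := by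
  intro f
  have hpos : ∀ x, 0 < 1 + |f x| := fun x => by positivity
  obtain ⟨H, hH, hH01⟩ := exists_stoneCech_extension_of_mem_Icc (a := 0) (b := 1)
    (f := fun x => (1 + |f x|)⁻¹) (by fun_prop (disch := exact fun x => (hpos x).ne'))
    (fun x => ⟨(inv_pos.2 (hpos x)).le, inv_le_one_of_one_le₀ (by simp)⟩)
  -- A zero of `H` on `K ⊆ υX` would give a zero-set of `βX` missing `X`.
  have hHK : ∀ q ∈ K, 0 < H q := by
    intro q hq
    refine (hH01 q).1.lt_of_ne fun h0 => ?_
    obtain ⟨_, hz, x, rfl⟩ := hKυ hq _ ⟨H, rfl⟩ h0.symm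
    exact (inv_pos.2 (hpos x)).ne' ((hH x).symm.trans hz)
  obtain ⟨δ, hδ, hδK⟩ := hK.exists_forall_le' H.continuous.continuousOn hHK
  refine ⟨δ⁻¹, fun x hx => ?_⟩
  have hx : δ ≤ (1 + |f x|)⁻¹ := hH x ▸ hδK _ hx
  linarith [(le_inv_comm₀ hδ (hpos x)).1 hx]

lemma isRelativelyPseudocompact_iff_closure_image_subset_upsilonSet {A : Set X} :
    IsRelativelyPseudocompact A ↔ closure (stoneCechUnit '' A) ⊆ upsilonSet X :=
  ⟨IsRelativelyPseudocompact.closure_image_subset_upsilonSet, fun h =>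
    (isClosed_closure.isCompact.isRelativelyPseudocompact_preimage h).mono
      fun _ hx => subset_closure (mem_image_of_mem _ hx)⟩

lemma abs_le_of_forall_mem_abs_le {s : Set X} (k : C(closure s, ℝ)) {M : ℝ}
    (h : ∀ x (hx : x ∈ s), |k ⟨x, subset_closure hx⟩| ≤ M) (a : closure s) :
    |k a| ≤ M := by
  have hdense : closure (Subtype.val ⁻¹' s : Set (closure s)) = univ := by
    refine eq_univ_of_forall fun b => closure_subtype.2 ?_
    rw [image_preimage_eq_inter_range, Subtype.range_coe, inter_eq_left.2 subset_closure]
    exact b.2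
  have hsub : (Subtype.val ⁻¹' s : Set (closure s)) ⊆ {a | |k a| ≤ M} := fun b hb => h b hb
  exact closure_minimal hsub (isClosed_le k.continuous.abs continuous_const) (hdense ▸ mem_univ a)

lemma exists_continuous_map_zero_one_half_pow_le {t : ℕ → ℝ} (ht : ∀ n, 0 < t n) :
    ∃ θ : ℝ → ℝ, Continuous θ ∧ θ 0 = 0 ∧ ∀ n, (1 / 2 : ℝ) ^ n ≤ θ (t n) := by
  set a : ℕ → ℝ → ℝ := fun n s => (1 / 2 : ℝ) ^ n * min 1 (|s| / t n)
  have ha : ∀ n s, 0 ≤ a n s ∧ a n s ≤ (1 / 2 : ℝ) ^ n := fun n s =>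
    ⟨mul_nonneg (by positivity) (le_min zero_le_one (div_nonneg (abs_nonneg s) (ht n).le)),
      mul_le_of_le_one_right (by positivity) (min_le_left _ _)⟩
  refine ⟨fun s => ∑' n, a n s, ?_, by simp [a], fun n => ?_⟩
  · refine continuous_tsum (fun n => by fun_prop) summable_geometric_two fun n s => ?_
    rw [Real.norm_of_nonneg (ha n s).1]
    exact (ha n s).2
  · have hsum : Summable fun m => a m (t n) :=
      summable_geometric_two.of_nonneg_of_le (fun m => (ha m _).1) fun m => (ha m _).2
    calc (1 / 2 : ℝ) ^ n = a n (t n) := by simp [a, abs_of_pos (ht n), (ht n).ne']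
      _ ≤ ∑' m, a m (t n) := hsum.le_tsum n fun m _ => (ha m _).1

lemma exists_continuous_eq_mul_on_closure {s : Set X} (hs : IsOpen s) {h : X → ℝ}
    (hh : Continuous h) (h0 : ∀ x ∉ s, h x = 0) (k : C(closure s, ℝ)) :
    ∃ F : C(X, ℝ), ∀ x (hx : x ∈ closure s), F x = h x * k ⟨x, hx⟩ := by
  classical
  set F : X → ℝ := fun x => if hx : x ∈ closure s then h x * k ⟨x, hx⟩ else 0
  have hcl : ContinuousOn F (closure s) := by
    rw [continuousOn_iff_continuous_domRestrict]
    convert (hh.comp continuous_subtype_val).mul k.continuous using 1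
    ext ⟨x, hx⟩
    simp [F, hx]
  have hcompl : ContinuousOn F sᶜ :=
    (continuousOn_const (c := (0 : ℝ))).congr fun x hx => by simp [F, h0 x hx]
  have hcover : closure s ∪ sᶜ = univ :=
    eq_univ_of_forall fun x => (em (x ∈ s)).imp (subset_closure ·) id
  refine ⟨⟨F, continuousOn_univ.1 ?_⟩, fun x hx => dif_pos hx⟩
  exact hcover ▸ hcl.union_of_isClosed hcompl isClosed_closure hs.isClosed_compl

lemma IsCozeroSet.isPseudocompactSet_closure {C : Set X} (hC : IsCozeroSet C)
    (hbdd : IsRelativelyPseudocompact C) : IsPseudocompactSet (closure C) := by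
  intro k
  by_contra! hk
  obtain ⟨c, hc⟩ := id hC
  have hcC : ∀ x, x ∈ C ↔ c x ≠ 0 := fun x => by
    rw [← not_iff_not, not_not, ← mem_compl_iff, hc]; rfl
  have hlarge :
      ∀ n : ℕ, ∃ x, ∃ hx : x ∈ C, n * 2 ^ n < |k ⟨x, subset_closure hx⟩| := by
    intro n
    by_contra! h
    obtain ⟨a, ha⟩ := hk (n * 2 ^ n)
    exact (abs_le_of_forall_mem_abs_le k h a).not_gt ha
  choose x hxC hxk using hlarge
  -- `θ` damps `|k|` near the boundary of `C` just enough to keep it unbounded along `x n`.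
  obtain ⟨θ, hθ, hθ0, hθx⟩ :=
    exists_continuous_map_zero_one_half_pow_le fun n => abs_pos.2 ((hcC (x n)).1 (hxC n))
  obtain ⟨F, hF⟩ := exists_continuous_eq_mul_on_closure hC.isOpen (h := fun y => θ |c y|)
    (by fun_prop)
    (fun y hy => by rw [not_not.1 (mt (hcC y).2 hy), abs_zero, hθ0]) k
  obtain ⟨M, hM⟩ := hbdd F
  obtain ⟨n, hn⟩ := exists_nat_gt M
  have hθn : 0 < θ |c (x n)| := (pow_pos one_half_pos n).trans_le (hθx n)
  have hFx := hM (x n) (hxC n)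
  rw [hF _ (subset_closure (hxC n)), abs_mul, abs_of_pos hθn] at hFx
  have : (n : ℝ) < θ |c (x n)| * |k ⟨x n, subset_closure (hxC n)⟩| :=
    calc (n : ℝ) = (1 / 2) ^ n * (n * 2 ^ n) := by rw [one_div, inv_pow]; field_simp
      _ < θ |c (x n)| * |k ⟨x n, subset_closure (hxC n)⟩| :=
        mul_lt_mul' (hθx n) (hxk n) (by positivity) hθn
  linarith

lemma IsCozeroSet.isPseudocompactSet_closure_iff {C : Set X} (hC : IsCozeroSet C) :
    IsPseudocompactSet (closure C) ↔ IsRelativelyPseudocompact C :=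
  ⟨fun h f => (h (f.restrict (closure C))).imp fun _ hM x hx => hM ⟨x, subset_closure hx⟩,
    hC.isPseudocompactSet_closure⟩

lemma closure_image_subset_interior_closure_image {Z C : Set X} (hZ : IsZeroSet Z)
    (hC : IsCozeroSet C) (hZC : Z ⊆ C) :
    closure (stoneCechUnit '' Z) ⊆ interior (closure (stoneCechUnit '' C)) := by
  obtain ⟨u, huZ, huC, hu01⟩ :=
    exists_continuous_zero_one_of_isZeroSet hZ hC (disjoint_compl_right_iff_subset.2 hZC)
  obtain ⟨U, hU, -⟩ := exists_stoneCech_extension_of_mem_Icc u.continuous hu01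
  set O : Set (StoneCech X) := {q | U q < 1 / 2}
  have hO : IsOpen O := isOpen_lt U.continuous continuous_const
  have hZO : closure (stoneCechUnit '' Z) ⊆ O := by
    refine (closure_minimal ?_ (isClosed_eq U.continuous continuous_const)).trans
      fun q (hq : U q = 0) => show U q < 1 / 2 by rw [hq]; norm_num
    rintro _ ⟨x, hx, rfl⟩
    exact (hU x).trans (huZ hx)
  have hOC : O ∩ range stoneCechUnit ⊆ stoneCechUnit '' C := by
    rintro _ ⟨hxO, x, rfl⟩
    refine ⟨x, by_contra fun hx => ?_, rfl⟩
    have : U (stoneCechUnit x) = 1 := (hU x).trans (huC hx)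
    exact absurd (show U (stoneCechUnit x) < 1 / 2 from hxO) (by rw [this]; norm_num)
  exact hZO.trans (interior_maximal
    ((denseRange_stoneCechUnit.open_subset_closure_inter hO).trans (closure_mono hOC)) hO)

lemma exists_mem_closure_image_notMem_range [CompletelyRegularSpace X] {Z : Set X}
    (hZ : IsClosed Z) (hZc : ¬ IsCompact Z) :
    ∃ p ∈ closure (stoneCechUnit '' Z), p ∉ range (stoneCechUnit : X → StoneCech X) := by
  by_contra! h
  refine hZc (isInducing_stoneCechUnit.isCompact_iff.2 (IsClosed.isCompact ?_))
  refine closure_subset_iff_isClosed.1 fun p hp => ?_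
  obtain ⟨x, rfl⟩ := h p hp
  refine ⟨x, ?_, rfl⟩
  rw [← hZ.closure_eq, isInducing_stoneCechUnit.closure_eq_preimage_closure_image]
  exact hp

lemma not_isCompact_preimage_of_mem_upsilonSet {p : StoneCech X} (hpυ : p ∈ upsilonSet X)
    (hpX : p ∉ range (stoneCechUnit : X → StoneCech X)) {Z : Set (StoneCech X)}
    (hZ : IsZeroSet Z) (hpZ : p ∈ Z) : ¬ IsCompact (stoneCechUnit ⁻¹' Z) := by
  intro hcomp
  have hK : IsClosed (stoneCechUnit '' (stoneCechUnit ⁻¹' Z)) :=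
    (hcomp.image continuous_stoneCechUnit).isClosed
  obtain ⟨e, he0, he1, -⟩ := exists_continuous_zero_one_of_isClosed isClosed_singleton hK
    (disjoint_singleton_left.2 fun ⟨x, _, hx⟩ => hpX ⟨x, hx⟩)
  obtain ⟨_, ⟨hxZ, hxe⟩, x, rfl⟩ := hpυ _ (hZ.inter ⟨e, rfl⟩) ⟨hpZ, he0 rfl⟩
  exact one_ne_zero ((he1 ⟨x, hxZ, rfl⟩).symm.trans hxe)

lemma zetaSet_eq_univ_iff_interior_upsilonSet_subset_range :
    zetaSet X = univ ↔ interior (upsilonSet X) ⊆ range (stoneCechUnit : X → StoneCech X) := by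
  rw [zetaSet, closure_compl, ← compl_subset_iff_union, compl_subset_compl]

end

theorem zetaSet_eq_univ_iff_general (X : Type*) [TopologicalSpace X]
    [CompletelyRegularSpace X] :
    zetaSet X = Set.univ ↔
      ¬ ∃ C Z : Set X, IsCozeroSet C ∧ IsPseudocompactSet (closure C) ∧
        IsZeroSet Z ∧ ¬ IsCompact Z ∧ Z ⊆ C := by
  rw [zetaSet_eq_univ_iff_interior_upsilonSet_subset_range]
  constructor
  · rintro hυ ⟨C, Z, hC, hCpc, hZ, hZc, hZC⟩
    obtain ⟨p, hpZ, hpX⟩ := exists_mem_closure_image_notMem_range hZ.isClosed hZc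
    have hCυ : closure (stoneCechUnit '' C) ⊆ upsilonSet X :=
      isRelativelyPseudocompact_iff_closure_image_subset_upsilonSet.1
        (hC.isPseudocompactSet_closure_iff.1 hCpc)
    exact hpX <| hυ <| interior_mono hCυ <|
      closure_image_subset_interior_closure_image hZ hC hZC hpZ
  · intro hno p hp
    by_contra hpX
    obtain ⟨f, hf0, hf1, -⟩ := exists_continuous_zero_one_of_isClosed isClosed_singleton
      isOpen_interior.isClosed_compl (disjoint_singleton_left.2 (not_not.2 hp))
    set g : C(X, ℝ) := f.comp ⟨stoneCechUnit, continuous_stoneCechUnit⟩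
    have hC := isCozeroSet_setOf_lt g (1 / 2)
    have hCυ : closure (stoneCechUnit '' {x | g x < 1 / 2}) ⊆ upsilonSet X :=
      calc closure (stoneCechUnit '' {x | g x < 1 / 2})
          _ ⊆ {q | f q ≤ 1 / 2} :=
            closure_minimal (by rintro _ ⟨x, hx : g x < 1 / 2, rfl⟩; exact hx.le)
              (isClosed_le f.continuous continuous_const)
          _ ⊆ interior (upsilonSet X) := fun q (hq : f q ≤ 1 / 2) => by_contra fun hq' => by
            rw [hf1 hq'] at hq; norm_num at hq
          _ ⊆ upsilonSet X := interior_subset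
    refine hno ⟨_, g ⁻¹' {0}, hC, hC.isPseudocompactSet_closure_iff.2
      (isRelativelyPseudocompact_iff_closure_image_subset_upsilonSet.2 hCυ), ⟨g, rfl⟩,
      not_isCompact_preimage_of_mem_upsilonSet (interior_subset hp) hpX ⟨f, rfl⟩ (hf0 rfl),
      fun x (hx : g x = 0) => show g x < 1 / 2 by rw [hx]; norm_num⟩

/-- `ζX = βX` if and only if there exists no cozero-set of `X` with pseudocompact closure
containing a non-compact zero-set of `X`. -/
theorem zetaSet_eq_univ_iff (X : Type*) [TopologicalSpace X] [T2Space X]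
    [CompletelyRegularSpace X] :
    zetaSet X = Set.univ ↔
      ¬ ∃ C Z : Set X, IsCozeroSet C ∧ IsPseudocompactSet (closure C) ∧
        IsZeroSet Z ∧ ¬ IsCompact Z ∧ Z ⊆ C :=
  zetaSet_eq_univ_iff_general X
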